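/- Let M = ((a,b,0),(c,d,0),(0,0,−a−d)) be a traceless 3×3 complex matrix. There exists λ ∈ ℂ such that M − λ·Id has rank at most 1 if and only if (2a+d)(a+2d) = bc, or (b = 0 and c = 0 and a = d). -/

import Mathlib

open Matrix

lemma rank_le_one_iff_outer {m n : Type*} [Fintype m] [Fintype n] [DecidableEq n]
    (A : Matrix m n ℂ) :
    A.rank ≤ 1 ↔ ∃ u : m → ℂ, ∃ v : n → ℂ, ∀ i j, A i j = u i * v j := by
  constructor
  · intro h
    rw [Matrix.rank, finrank_le_one_iff] at h
    obtain ⟨u, hu⟩ := h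
    choose c hc using fun j => hu ⟨A.mulVec (Pi.single j 1), ⟨Pi.single j 1, rfl⟩⟩
    refine ⟨fun i => (u : m → ℂ) i, c, fun i j => ?_⟩
    have h2 : (c j) • (u : m → ℂ) = A.mulVec (Pi.single j 1) := congrArg Subtype.val (hc j)
    have h3 := congrFun h2 i
    simp at h3
    rw [mul_comm]
    simpa using h3.symm
  · rintro ⟨u, v, huv⟩
    have hA : A = (Matrix.of fun i (_ : Fin 1) => u i) * (Matrix.of fun (_ : Fin 1) j => v j) := by
      ext i j
      simp [Matrix.mul_apply, huv i j]
    calc A.rank ≤ (Matrix.of fun i (_ : Fin 1) => u i).rank := hA ▸ Matrix.rank_mul_le_left _ _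
    _ ≤ Fintype.card (Fin 1) := Matrix.rank_le_card_width _
    _ = 1 := by simp

/-- For `M = ((a,b,0),(c,d,0),(0,0,−a−d))`, there is `λ ∈ ℂ` with `rank(M − λ·Id) ≤ 1`
iff `(2a+d)(a+2d) = bc`, or `b = c = 0` and `a = d`. -/
theorem rank_one_condition_block_matrix (a b c d : ℂ) :
    (∃ lam : ℂ,
        ((!![a, b, 0; c, d, 0; 0, 0, -a - d] : Matrix (Fin 3) (Fin 3) ℂ)
          - lam • (1 : Matrix (Fin 3) (Fin 3) ℂ)).rank ≤ 1) ↔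
      ((2 * a + d) * (a + 2 * d) = b * c ∨ (b = 0 ∧ c = 0 ∧ a = d)) := by
  constructor
  · rintro ⟨lam, h⟩
    rw [rank_le_one_iff_outer] at h
    obtain ⟨u, v, huv⟩ := h
    have e00 := huv 0 0
    have e01 := huv 0 1
    have e02 := huv 0 2
    have e10 := huv 1 0
    have e11 := huv 1 1
    have e12 := huv 1 2
    have e22 := huv 2 2
    simp [Matrix.one_apply, sub_eq_iff_eq_add] at e00 e01 e02 e10 e11 e12 e22
    by_cases hz : -a - d - lam = 0
    · left
      have hlam : lam = -a - d := by linear_combination -hz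
      subst hlam
      have k1 : u 0 * v 0 = 2 * a + d := by linear_combination -e00
      have k2 : u 1 * v 1 = a + 2 * d := by linear_combination -e11
      rw [e01, e10, ← k1, ← k2]
      ring
    · right
      have hv2 : v 2 ≠ 0 := by
        intro hcon
        exact hz (by linear_combination e22 + u 2 * hcon)
      have hu0 : u 0 = 0 := e02.resolve_right hv2
      have hu1 : u 1 = 0 := e12.resolve_right hv2
      refine ⟨by rw [e01, hu0, zero_mul], by rw [e10, hu1, zero_mul], ?_⟩
      rw [e00, e11, hu0, hu1, zero_mul, zero_mul]
  · rintro (h | ⟨hb, hc, had⟩)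
    · refine ⟨-a - d, ?_⟩
      rw [rank_le_one_iff_outer]
      by_cases h2 : 2 * a + d = 0
      · by_cases hbz : b = 0
        · refine ⟨![0, 1, 0], ![c, a + 2 * d, 0], fun i j => ?_⟩
          fin_cases i <;> fin_cases j <;>
            simp [Matrix.one_apply, Matrix.vecHead, Matrix.vecTail, hbz] <;>
            ring_nf <;>
            first
              | rfl
              | linear_combination h2
              | linear_combination -h2
        · have hcz : c = 0 := by
            have hbc : b * c = 0 := by rw [← h, h2]; ring
            exact (mul_eq_zero.mp hbc).resolve_left hbz
          refine ⟨![b, a + 2 * d, 0], ![0, 1, 0], fun i j => ?_⟩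
          fin_cases i <;> fin_cases j <;>
            simp [Matrix.one_apply, Matrix.vecHead, Matrix.vecTail, hcz] <;>
            ring_nf <;>
            first
              | rfl
              | linear_combination h2
              | linear_combination -h2
      · refine ⟨![2 * a + d, c, 0], ![1, b / (2 * a + d), 0], fun i j => ?_⟩
        fin_cases i <;> fin_cases j <;>
          simp [Matrix.one_apply, Matrix.vecHead, Matrix.vecTail] <;>
          (try field_simp [show a * 2 + d ≠ 0 by rw [mul_comm]; exact h2]) <;>
          ring_nf <;>
          first
            | rfl
            | linear_combination h
            | linear_combination -h
            | linear_combination 2 * h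
            | linear_combination -2 * h
    · refine ⟨a, ?_⟩
      rw [rank_le_one_iff_outer]
      refine ⟨![0, 0, 1], ![0, 0, -3 * a], fun i j => ?_⟩
      fin_cases i <;> fin_cases j <;>
        simp [Matrix.one_apply, Matrix.vecHead, Matrix.vecTail, hb, hc] <;>
        ring_nf <;>
        first
          | rfl
          | linear_combination had
          | linear_combination -had
          | linear_combination 2 * had
          | linear_combination -2 * had
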